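/- In any execution of the fully dynamic algorithm on a stream containing at most n insertions, for every realization of the random choices and every level 0 ≤ ℓ ≤ L, the number of times that Level-Construct(ℓ) is called directly from the Insertion routine (i.e., as the smallest level whose buffer reached size n/2^ℓ) over the whole stream is at most 2^ℓ. -/

import Mathlib

open Finset

attribute [local instance] Classical.propDecidable

universe u

/-- A matroid on a ground set `α`, given as a nonempty, downward closed family of
finite independent sets satisfying the augmentation property. -/
structure MatroidOn (α : Type u) where
  Indep : Finset α → Prop
  nonempty : ∃ A, Indep A
  subset_indep : ∀ ⦃A B : Finset α⦄, A ⊆ B → Indep B → Indep A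
  augment : ∀ ⦃A B : Finset α⦄, Indep A → Indep B → A.card < B.card →
    ∃ e ∈ B, e ∉ A ∧ Indep (insert e A)

/-- Submodularity of a set function. -/
def SubmodularFn {α : Type u} [DecidableEq α] (f : Finset α → ℝ) : Prop :=
  ∀ X Y : Finset α, X ⊆ Y → ∀ e, e ∉ Y →
    f (insert e Y) - f Y ≤ f (insert e X) - f X

/-- Monotonicity of a set function. -/
def MonotoneFn {α : Type u} (f : Finset α → ℝ) : Prop :=
  ∀ X Y : Finset α, X ⊆ Y → f X ≤ f Y

variable {α : Type u} [DecidableEq α]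

/-- The marginal gain `f(e | T) = f (T ∪ {e}) - f T`. -/
def marg (f : Finset α → ℝ) (T : Finset α) (e : α) : ℝ := f (insert e T) - f T

/-- State of the fully dynamic algorithm.  For each level `ℓ ∈ {0, …, L}` it keeps the
candidate set `A ℓ`, the buffer `B ℓ`, the partial solution `S ℓ` and the set `S' ℓ`,
together with the weights `w`.  The fields `X ℓ` and `Y ℓ` record, for the most recent
execution of `Level-Construct(ℓ)`, the elements added to `S ℓ` there and the elements
filtered out there (they are empty if `Level-Construct(ℓ)` was never executed).
`V` is the set of elements currently inserted and not deleted.  The ghost fields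
`maxA ℓ` and `maxB ℓ` record the largest cardinality ever attained by `A ℓ` and `B ℓ`
during the execution, and `insCalls ℓ` counts how many times `Level-Construct(ℓ)` was
called directly from the `Insertion` routine. -/
structure DynState (α : Type u) where
  A : ℕ → Finset α
  B : ℕ → Finset α
  S : ℕ → Finset α
  S' : ℕ → Finset α
  w : α → ℝ
  X : ℕ → Finset α
  Y : ℕ → Finset α
  V : Finset α
  maxA : ℕ → ℕ
  maxB : ℕ → ℕ
  insCalls : ℕ → ℕ

/-- The initial state: everything is empty. -/
def DynState.init (α : Type u) : DynState α where
  A := fun _ => ∅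
  B := fun _ => ∅
  S := fun _ => ∅
  S' := fun _ => ∅
  w := fun _ => 0
  X := fun _ => ∅
  Y := fun _ => ∅
  V := ∅
  maxA := fun _ => 0
  maxB := fun _ => 0
  insCalls := fun _ => 0

/-- `A (ℓ-1)`, read as `∅` for `ℓ = 0`. -/
def prevA (st : DynState α) (ℓ : ℕ) : Finset α := if ℓ = 0 then ∅ else st.A (ℓ - 1)

/-- `B (ℓ-1)`, read as the current `B 0` for `ℓ = 0`. -/
def prevB (st : DynState α) (ℓ : ℕ) : Finset α := if ℓ = 0 then st.B 0 else st.B (ℓ - 1)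

/-- `S (ℓ-1)`, read as `∅` for `ℓ = 0`. -/
def prevS (st : DynState α) (ℓ : ℕ) : Finset α := if ℓ = 0 then ∅ else st.S (ℓ - 1)

/-- `S' (ℓ-1)`, read as `∅` for `ℓ = 0`. -/
def prevS' (st : DynState α) (ℓ : ℕ) : Finset α := if ℓ = 0 then ∅ else st.S' (ℓ - 1)

/-- Initialization of `Level-Construct(ℓ)`:
`A ℓ := A (ℓ-1) ∪ B (ℓ-1)`, `B ℓ := ∅`, `S ℓ := S (ℓ-1)`, `S' ℓ := S' (ℓ-1)`;
the record `Y ℓ` of elements filtered out in this execution is reset. -/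
def initLevel (ℓ : ℕ) (st : DynState α) : DynState α :=
  { st with
    A := Function.update st.A ℓ (prevA st ℓ ∪ prevB st ℓ)
    B := Function.update st.B ℓ ∅
    S := Function.update st.S ℓ (prevS st ℓ)
    S' := Function.update st.S' ℓ (prevS' st ℓ)
    Y := Function.update st.Y ℓ ∅
    maxA := Function.update st.maxA ℓ (max (st.maxA ℓ) (prevA st ℓ ∪ prevB st ℓ).card) }

/-- The set `E ℓ` of candidates that can be added to `S ℓ` keeping independence. -/
noncomputable def Eset (M : MatroidOn α) (ℓ : ℕ) (st : DynState α) : Finset α :=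
  (st.A ℓ).filter fun e => M.Indep (insert e (st.S ℓ))

/-- The set `F ℓ` of candidates `e` that cannot be added directly but admit a
minimum-weight swap `y` with `w e > 2 · w y` (weights given by `w1`). -/
noncomputable def Fset (M : MatroidOn α) (ℓ : ℕ) (st : DynState α) (w1 : α → ℝ) : Finset α :=
  (st.A ℓ).filter fun e =>
    ¬ M.Indep (insert e (st.S ℓ)) ∧
      ∃ y ∈ st.S ℓ, M.Indep (insert e ((st.S ℓ).erase y)) ∧
        (∀ z ∈ st.S ℓ, M.Indep (insert e ((st.S ℓ).erase z)) → w1 y ≤ w1 z) ∧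
        2 * w1 y < w1 e

/-- The deterministic part of one iteration of the repeat loop of `Level-Construct(ℓ)`:
every `e ∈ A ℓ` gets weight `w e := f(e | S' ℓ)`, and `A ℓ` is replaced by `E ℓ ∪ F ℓ`;
the filtered-out elements `A ℓ \ (E ℓ ∪ F ℓ)` are accumulated into `Y ℓ`. -/
noncomputable def filterState (f : Finset α → ℝ) (M : MatroidOn α) (ℓ : ℕ) (st : DynState α) :
    DynState α :=
  let w1 : α → ℝ := fun e =>
    if e ∈ st.A ℓ then f (insert e (st.S' ℓ)) - f (st.S' ℓ) else st.w e
  let Anew := Eset M ℓ st ∪ Fset M ℓ st w1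
  { st with
    A := Function.update st.A ℓ Anew
    w := w1
    Y := Function.update st.Y ℓ (st.Y ℓ ∪ (st.A ℓ \ Anew))
    maxA := Function.update st.maxA ℓ (max (st.maxA ℓ) Anew.card) }

/-- Auxiliary state transformation: pop `e` from `A ℓ`, replace `S ℓ` by `Snew` and add
`e` to `S' ℓ`. -/
def popState (ℓ : ℕ) (st : DynState α) (e : α) (Snew : Finset α) : DynState α :=
  { st with
    A := Function.update st.A ℓ ((st.A ℓ).erase e)
    S := Function.update st.S ℓ Snew
    S' := Function.update st.S' ℓ (insert e (st.S' ℓ))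
    maxA := Function.update st.maxA ℓ (max (st.maxA ℓ) ((st.A ℓ).erase e).card) }

/-- Popping an arbitrary element `e` from `A ℓ` (the element popped is chosen uniformly at
random; the relation allows every possible choice) and adding it to the solution, swapping
out a minimum-weight element `y` if necessary. -/
inductive LCPop (M : MatroidOn α) (ℓ : ℕ) : DynState α → DynState α → Prop
  | add {st : DynState α} {e : α} (he : e ∈ st.A ℓ)
      (hind : M.Indep (insert e (st.S ℓ))) :
      LCPop M ℓ st (popState ℓ st e (insert e (st.S ℓ)))
  | swap {st : DynState α} {e y : α} (he : e ∈ st.A ℓ)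
      (hind : ¬ M.Indep (insert e (st.S ℓ)))
      (hy : y ∈ st.S ℓ) (hyind : M.Indep (insert e ((st.S ℓ).erase y)))
      (hmin : ∀ z ∈ st.S ℓ, M.Indep (insert e ((st.S ℓ).erase z)) → st.w y ≤ st.w z) :
      LCPop M ℓ st (popState ℓ st e (insert e ((st.S ℓ).erase y)))

/-- One iteration of the repeat loop of `Level-Construct(ℓ)`: filter, and pop one random
element if `|A ℓ| ≥ n / 2^ℓ` still holds after filtering. -/
inductive LCBody (f : Finset α → ℝ) (M : MatroidOn α) (n ℓ : ℕ) :
    DynState α → DynState α → Prop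
  | nopop {st : DynState α}
      (h : ((filterState f M ℓ st).A ℓ).card < n / 2 ^ ℓ) :
      LCBody f M n ℓ st (filterState f M ℓ st)
  | pop {st st' : DynState α}
      (h : ¬ ((filterState f M ℓ st).A ℓ).card < n / 2 ^ ℓ)
      (hp : LCPop M ℓ (filterState f M ℓ st) st') :
      LCBody f M n ℓ st st'

/-- The repeat loop of `Level-Construct(ℓ)`, iterated until `|A ℓ| < n / 2^ℓ`. -/
inductive LCLoop (f : Finset α → ℝ) (M : MatroidOn α) (n ℓ : ℕ) :
    DynState α → DynState α → Prop
  | done {st st' : DynState α} (hb : LCBody f M n ℓ st st')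
      (h : (st'.A ℓ).card < n / 2 ^ ℓ) : LCLoop f M n ℓ st st'
  | more {st st' st'' : DynState α} (hb : LCBody f M n ℓ st st')
      (h : ¬ (st'.A ℓ).card < n / 2 ^ ℓ)
      (hrest : LCLoop f M n ℓ st' st'') : LCLoop f M n ℓ st st''

/-- Record `X ℓ := S ℓ \ S (ℓ-1)` at the end of an execution of `Level-Construct(ℓ)`. -/
def setXlevel (ℓ : ℕ) (st : DynState α) : DynState α :=
  { st with X := Function.update st.X ℓ (st.S ℓ \ prevS st ℓ) }

/-- `LC f M n L ℓ st st'` : a full execution of `Level-Construct(ℓ)` (including the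
recursive calls at levels `ℓ+1, …, L`) starting from state `st` may end in state `st'`. -/
inductive LC (f : Finset α → ℝ) (M : MatroidOn α) (n L : ℕ) :
    ℕ → DynState α → DynState α → Prop
  | last {st st' : DynState α} (hloop : LCLoop f M n L (initLevel L st) st') :
      LC f M n L L st (setXlevel L st')
  | step {ℓ : ℕ} {st st' st'' : DynState α} (hℓ : ℓ < L)
      (hloop : LCLoop f M n ℓ (initLevel ℓ st) st')
      (hnext : LC f M n L (ℓ + 1) (setXlevel ℓ st') st'') :
      LC f M n L ℓ st st''

/-- Add the newly inserted element `e` to every buffer `B ℓ`, `0 ≤ ℓ ≤ L`, and to `V`. -/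
def insB (L : ℕ) (e : α) (st : DynState α) : DynState α :=
  { st with
    B := fun m => if m ≤ L then insert e (st.B m) else st.B m
    V := insert e st.V
    maxB := fun m =>
      if m ≤ L then max (st.maxB m) (insert e (st.B m)).card else st.maxB m }

/-- Increment the counter of direct calls to `Level-Construct(ℓ)` from `Insertion`. -/
def bumpIns (ℓ : ℕ) (st : DynState α) : DynState α :=
  { st with insCalls := Function.update st.insCalls ℓ (st.insCalls ℓ + 1) }

/-- Remove the deleted element `e` from every `A ℓ` and `B ℓ`, and from `V`. -/
def delElems (e : α) (st : DynState α) : DynState α :=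
  { st with
    A := fun m => (st.A m).erase e
    B := fun m => (st.B m).erase e
    V := st.V.erase e }

/-- A stream operation: insertion or deletion of an element. -/
inductive Oper (α : Type u)
  | ins (e : α)
  | del (e : α)

/-- Whether an operation is an insertion. -/
def Oper.isIns : Oper α → Bool
  | .ins _ => true
  | .del _ => false

/-- Processing one operation of the stream.  An insertion adds `e` to all buffers and, if
some level `ℓ ≤ L` has `|B ℓ| ≥ n / 2^ℓ`, calls `Level-Construct(ℓ*)` for the smallest
such `ℓ*`.  A deletion (of a previously inserted, not yet deleted element) removes `e`
from all `A ℓ` and `B ℓ` and, if `e ∈ S ℓ` for some `ℓ ≤ L`, calls `Level-Construct(ℓ)`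
for the smallest such `ℓ`. -/
inductive DynStep (f : Finset α → ℝ) (M : MatroidOn α) (n L : ℕ) :
    DynState α → Oper α → DynState α → Prop
  | insTrigger {st st' : DynState α} {e : α} (ℓs : ℕ) (he : e ∉ st.V)
      (hℓ : ℓs ≤ L) (hbig : n / 2 ^ ℓs ≤ ((insB L e st).B ℓs).card)
      (hmin : ∀ m, m ≤ L → n / 2 ^ m ≤ ((insB L e st).B m).card → ℓs ≤ m)
      (hlc : LC f M n L ℓs (bumpIns ℓs (insB L e st)) st') :
      DynStep f M n L st (.ins e) st'
  | insNoTrigger {st : DynState α} {e : α} (he : e ∉ st.V)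
      (h : ∀ m ≤ L, ((insB L e st).B m).card < n / 2 ^ m) :
      DynStep f M n L st (.ins e) (insB L e st)
  | delTrigger {st st' : DynState α} {e : α} (ℓ : ℕ) (he : e ∈ st.V)
      (hℓ : ℓ ≤ L) (hin : e ∈ st.S ℓ)
      (hmin : ∀ m, m ≤ L → e ∈ st.S m → ℓ ≤ m)
      (hlc : LC f M n L ℓ (delElems e st) st') :
      DynStep f M n L st (.del e) st'
  | delNoTrigger {st : DynState α} {e : α} (he : e ∈ st.V)
      (h : ∀ m ≤ L, e ∉ st.S m) :
      DynStep f M n L st (.del e) (delElems e st)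

/-- `DynRun f M n L ops st` : some execution of the fully dynamic algorithm processing
the stream `ops` (for some realization of the random choices) ends in state `st`. -/
inductive DynRun (f : Finset α → ℝ) (M : MatroidOn α) (n L : ℕ) :
    List (Oper α) → DynState α → Prop
  | nil : DynRun f M n L [] (DynState.init α)
  | snoc {ops : List (Oper α)} {st st' : DynState α} {op : Oper α}
      (hrun : DynRun f M n L ops st) (hstep : DynStep f M n L st op st') :
      DynRun f M n L (ops ++ [op]) st'

lemma LCBody_B_insCalls {f : Finset α → ℝ} {M : MatroidOn α} {n ℓ : ℕ}
    {st st' : DynState α} (h : LCBody f M n ℓ st st') :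
    st'.B = st.B ∧ st'.insCalls = st.insCalls := by
  cases h with
  | nopop _ => exact ⟨rfl, rfl⟩
  | pop _ hp => cases hp <;> exact ⟨rfl, rfl⟩

lemma LCLoop_B_insCalls {f : Finset α → ℝ} {M : MatroidOn α} {n ℓ : ℕ}
    {st st' : DynState α} (h : LCLoop f M n ℓ st st') :
    st'.B = st.B ∧ st'.insCalls = st.insCalls := by
  induction h with
  | done hb _ => exact LCBody_B_insCalls hb
  | more hb _ _ ih =>
    obtain ⟨h1, h2⟩ := LCBody_B_insCalls hb
    obtain ⟨h3, h4⟩ := ih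
    exact ⟨h3.trans h1, h4.trans h2⟩

lemma LC_B_insCalls {f : Finset α → ℝ} {M : MatroidOn α} {n L ℓ : ℕ}
    {st st' : DynState α} (h : LC f M n L ℓ st st') :
    st'.insCalls = st.insCalls ∧
    (∀ m, ℓ ≤ m → m ≤ L → st'.B m = ∅) ∧
    (∀ m, m < ℓ → st'.B m = st.B m) := by
  induction h with
  | @last st st1 hloop =>
    obtain ⟨hB, hI⟩ := LCLoop_B_insCalls hloop
    have hB' : (setXlevel L st1).B = Function.update st.B L ∅ := hB
    refine ⟨hI, ?_, ?_⟩
    · intro m h1 h2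
      have : m = L := le_antisymm h2 h1
      subst this
      rw [hB', Function.update_self]
    · intro m hm
      rw [hB', Function.update_of_ne (Nat.ne_of_lt hm)]
  | @step ℓ st st1 st2 hℓ hloop hnext ih =>
    obtain ⟨hB, hI⟩ := LCLoop_B_insCalls hloop
    obtain ⟨ih1, ih2, ih3⟩ := ih
    have hB' : (setXlevel ℓ st1).B = Function.update st.B ℓ ∅ := hB
    refine ⟨ih1.trans hI, ?_, ?_⟩
    · intro m h1 h2
      rcases eq_or_lt_of_le h1 with h1 | h1
      · rw [ih3 m (h1 ▸ Nat.lt_succ_self m), hB', h1, Function.update_self]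
      · exact ih2 m h1 h2
    · intro m hm
      rw [ih3 m (hm.trans (Nat.lt_succ_self ℓ)), hB',
        Function.update_of_ne (Nat.ne_of_lt hm)]

lemma run_invariant {f : Finset α → ℝ} {M : MatroidOn α} {n L : ℕ}
    {ops : List (Oper α)} {st : DynState α}
    (hrun : DynRun f M n L ops st) (ℓ : ℕ) (hℓ : ℓ ≤ L) :
    st.insCalls ℓ * (n / 2 ^ ℓ) + (st.B ℓ).card ≤
      ops.countP (fun o => o.isIns) := by
  induction hrun with
  | nil => simp [DynState.init]
  | @snoc ops st0 st' op hrun hstep ih =>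
    rw [List.countP_append]
    cases hstep with
    | @insTrigger _ e ℓs he hℓs hbig hmin hlc =>
      obtain ⟨hI, hBempty, hBsame⟩ := LC_B_insCalls hlc
      have hIval : st'.insCalls ℓ =
          Function.update st0.insCalls ℓs (st0.insCalls ℓs + 1) ℓ := by
        rw [hI]; rfl
      have hcount : (List.countP (fun o => o.isIns) [Oper.ins e] : ℕ) = 1 := by
        simp [Oper.isIns]
      rw [hcount]
      rcases lt_trichotomy ℓ ℓs with hlt | heq | hgt
      · have h1 : st'.insCalls ℓ = st0.insCalls ℓ := by
          rw [hIval, Function.update_of_ne (Nat.ne_of_lt hlt)]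
        have h2 : st'.B ℓ = insert e (st0.B ℓ) := by
          rw [hBsame ℓ hlt]
          show (bumpIns ℓs (insB L e st0)).B ℓ = _
          simp [bumpIns, insB, hℓ]
        rw [h1, h2]
        calc st0.insCalls ℓ * (n / 2 ^ ℓ) + (insert e (st0.B ℓ)).card
            ≤ st0.insCalls ℓ * (n / 2 ^ ℓ) + ((st0.B ℓ).card + 1) := by
              exact Nat.add_le_add_left (Finset.card_insert_le _ _) _
          _ ≤ _ := by omega
      · subst heq
        have h1 : st'.insCalls ℓ = st0.insCalls ℓ + 1 := by
          rw [hIval, Function.update_self]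
        have h2 : st'.B ℓ = ∅ := hBempty ℓ le_rfl hℓ
        have hbig' : n / 2 ^ ℓ ≤ (insert e (st0.B ℓ)).card := by
          have : ((insB L e st0).B ℓ) = insert e (st0.B ℓ) := by
            simp [insB, hℓ]
          rwa [this] at hbig
        have hcard : (insert e (st0.B ℓ)).card ≤ (st0.B ℓ).card + 1 :=
          Finset.card_insert_le _ _
        rw [h1, h2]
        simp only [Finset.card_empty, Nat.add_zero, Nat.add_mul, Nat.one_mul]
        omega
      · have h1 : st'.insCalls ℓ = st0.insCalls ℓ := by
          rw [hIval, Function.update_of_ne (Nat.ne_of_gt hgt)]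
        have h2 : st'.B ℓ = ∅ := hBempty ℓ (le_of_lt hgt) hℓ
        rw [h1, h2]
        simp only [Finset.card_empty, Nat.add_zero]
        omega
    | @insNoTrigger e he h =>
      have h2 : (insB L e st0).B ℓ = insert e (st0.B ℓ) := by simp [insB, hℓ]
      have h1 : (insB L e st0).insCalls ℓ = st0.insCalls ℓ := rfl
      have hcount : (List.countP (fun o => o.isIns) [Oper.ins e] : ℕ) = 1 := by
        simp [Oper.isIns]
      rw [hcount, h1, h2]
      calc st0.insCalls ℓ * (n / 2 ^ ℓ) + (insert e (st0.B ℓ)).card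
          ≤ st0.insCalls ℓ * (n / 2 ^ ℓ) + ((st0.B ℓ).card + 1) :=
            Nat.add_le_add_left (Finset.card_insert_le _ _) _
        _ ≤ _ := by omega
    | @delTrigger _ e ℓd he hℓd hin hmin hlc =>
      obtain ⟨hI, hBempty, hBsame⟩ := LC_B_insCalls hlc
      have h1 : st'.insCalls ℓ = st0.insCalls ℓ := by rw [hI]; rfl
      have hcount : (List.countP (fun o => o.isIns) [Oper.del e] : ℕ) = 0 := by
        simp [Oper.isIns]
      rw [hcount, h1, Nat.add_zero]
      rcases lt_or_ge ℓ ℓd with hlt | hge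
      · have h2 : st'.B ℓ = (st0.B ℓ).erase e := hBsame ℓ hlt
        rw [h2]
        calc st0.insCalls ℓ * (n / 2 ^ ℓ) + ((st0.B ℓ).erase e).card
            ≤ st0.insCalls ℓ * (n / 2 ^ ℓ) + (st0.B ℓ).card :=
              Nat.add_le_add_left (Finset.card_erase_le) _
          _ ≤ _ := ih
      · have h2 : st'.B ℓ = ∅ := hBempty ℓ hge hℓ
        rw [h2]
        simp only [Finset.card_empty, Nat.add_zero]
        omega
    | @delNoTrigger e he h =>
      have hcount : (List.countP (fun o => o.isIns) [Oper.del e] : ℕ) = 0 := by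
        simp [Oper.isIns]
      rw [hcount, Nat.add_zero]
      show st0.insCalls ℓ * (n / 2 ^ ℓ) + ((st0.B ℓ).erase e).card ≤ _
      calc st0.insCalls ℓ * (n / 2 ^ ℓ) + ((st0.B ℓ).erase e).card
          ≤ st0.insCalls ℓ * (n / 2 ^ ℓ) + (st0.B ℓ).card :=
            Nat.add_le_add_left (Finset.card_erase_le) _
        _ ≤ _ := ih

theorem dynamic_insertion_calls_bound
    (f : Finset α → ℝ) (M : MatroidOn α)
    (hmono : MonotoneFn f) (hnorm : f ∅ = 0) (hsub : SubmodularFn f)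
    (n L : ℕ) (hn : n = 2 ^ L)
    (ops : List (Oper α))
    (hins : ops.countP (fun o => o.isIns) ≤ n)
    (st : DynState α) (hrun : DynRun f M n L ops st) :
    ∀ ℓ ≤ L, st.insCalls ℓ ≤ 2 ^ ℓ := by
  intro ℓ hℓ
  have hinv := run_invariant hrun ℓ hℓ
  have hdiv : n / 2 ^ ℓ = 2 ^ (L - ℓ) := by
    rw [hn, Nat.pow_div hℓ (by norm_num)]
  have hmul : st.insCalls ℓ * 2 ^ (L - ℓ) ≤ 2 ^ ℓ * 2 ^ (L - ℓ) := by
    have : 2 ^ ℓ * 2 ^ (L - ℓ) = 2 ^ L := by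
      rw [← pow_add, Nat.add_sub_cancel' hℓ]
    rw [this, ← hn]
    calc st.insCalls ℓ * 2 ^ (L - ℓ)
        ≤ st.insCalls ℓ * (n / 2 ^ ℓ) + (st.B ℓ).card := by rw [hdiv]; omega
      _ ≤ ops.countP (fun o => o.isIns) := hinv
      _ ≤ n := hins
  exact Nat.le_of_mul_le_mul_right hmul (Nat.pow_pos (by norm_num))
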